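/- Let N₀, N₁, N₂, N₃, N₄ ∈ ℝ³ be unit vectors with Nᵢ ≠ N₀ and Nᵢ ≠ −N₀ for i = 1, 2, 3, 4. Let μ₁ = μ₃ = 1 and μ₂ = μ₄ = −1, set eᵢ = μᵢ (Nᵢ − N₀)/‖Nᵢ − N₀‖², and assume e₁ + e₂ + e₃ + e₄ = 0. For θ ∈ ℝ set eᵢ^θ = cos θ · eᵢ + sin θ · (N₀ × eᵢ). Then for every θ: e₁^θ × e₂^θ + e₃^θ × e₄^θ = e₁ × e₂ + e₃ × e₄, and this vector is a scalar multiple of N₀. (Hence the vector area of each face of the associated family f^θ of a P-net is independent of θ and parallel to the Gauss map.) -/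

import Mathlib

open Matrix

/-- The Euclidean dot product on `ℝ³`. -/
def dot3 (u v : Fin 3 → ℝ) : ℝ := u ⬝ᵥ v

private lemma dot3_exp (u v : Fin 3 → ℝ) :
    dot3 u v = u 0 * v 0 + u 1 * v 1 + u 2 * v 2 := by
  simp [dot3, dotProduct, Fin.sum_univ_three]

private lemma dot3_smul_right (r : ℝ) (u v : Fin 3 → ℝ) :
    dot3 u (r • v) = r * dot3 u v := by
  simp only [dot3_exp, Pi.smul_apply, smul_eq_mul]; ring

private lemma dot3_sub_right (u a b : Fin 3 → ℝ) :
    dot3 u (a - b) = dot3 u a - dot3 u b := by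
  simp only [dot3_exp, Pi.sub_apply]; ring

private lemma dot3_add_right (u a b : Fin 3 → ℝ) :
    dot3 u (a + b) = dot3 u a + dot3 u b := by
  simp only [dot3_exp, Pi.add_apply]; ring

private lemma crossL1 (u a b : Fin 3 → ℝ) :
    crossProduct u (crossProduct a b) = (dot3 u b) • a - (dot3 u a) • b := by
  funext i
  fin_cases i <;>
    simp [cross_apply, Matrix.vecHead, Matrix.vecTail, Pi.smul_apply, Pi.add_apply,
      Pi.sub_apply, smul_eq_mul, dot3, dotProduct, Fin.sum_univ_three] <;> ring

private lemma crossL2 (u a b : Fin 3 → ℝ) (c s : ℝ) :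
    crossProduct (c • a + s • crossProduct u a) (c • b + s • crossProduct u b) =
      (c * c) • crossProduct a b
        + (c * s) • ((dot3 u b) • a - (dot3 u a) • b)
        + (s * s * dot3 u (crossProduct a b)) • u := by
  funext i
  fin_cases i <;>
    simp [cross_apply, Matrix.vecHead, Matrix.vecTail, Pi.smul_apply, Pi.add_apply,
      Pi.sub_apply, smul_eq_mul, dot3, dotProduct, Fin.sum_univ_three] <;> ring

private lemma dot3_self_eq_zero {v : Fin 3 → ℝ} (h : dot3 v v = 0) : v = 0 := by
  rw [dot3_exp] at h
  have h0 : v 0 = 0 := by nlinarith [sq_nonneg (v 0), sq_nonneg (v 1), sq_nonneg (v 2)]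
  have h1 : v 1 = 0 := by nlinarith [sq_nonneg (v 0), sq_nonneg (v 1), sq_nonneg (v 2)]
  have h2 : v 2 = 0 := by nlinarith [sq_nonneg (v 0), sq_nonneg (v 1), sq_nonneg (v 2)]
  funext i; fin_cases i <;> simp [h0, h1, h2]

/-- The vector area of each face of the associated family `f^θ` of a P-net is
independent of `θ` and parallel to the Gauss map. -/
theorem associated_family_vector_area_const
    (N₀ N₁ N₂ N₃ N₄ : Fin 3 → ℝ)
    (hN₀ : dot3 N₀ N₀ = 1) (hN₁ : dot3 N₁ N₁ = 1) (hN₂ : dot3 N₂ N₂ = 1)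
    (hN₃ : dot3 N₃ N₃ = 1) (hN₄ : dot3 N₄ N₄ = 1)
    (h1 : N₁ ≠ N₀) (h2 : N₂ ≠ N₀) (h3 : N₃ ≠ N₀) (h4 : N₄ ≠ N₀)
    (h1' : N₁ ≠ -N₀) (h2' : N₂ ≠ -N₀) (h3' : N₃ ≠ -N₀) (h4' : N₄ ≠ -N₀)
    (e₁ e₂ e₃ e₄ : Fin 3 → ℝ)
    (he₁ : e₁ = (1 / dot3 (N₁ - N₀) (N₁ - N₀)) • (N₁ - N₀))
    (he₂ : e₂ = (-1 / dot3 (N₂ - N₀) (N₂ - N₀)) • (N₂ - N₀))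
    (he₃ : e₃ = (1 / dot3 (N₃ - N₀) (N₃ - N₀)) • (N₃ - N₀))
    (he₄ : e₄ = (-1 / dot3 (N₄ - N₀) (N₄ - N₀)) • (N₄ - N₀))
    (hclosed : e₁ + e₂ + e₃ + e₄ = 0)
    (eθ : ℝ → (Fin 3 → ℝ) → (Fin 3 → ℝ))
    (heθ : ∀ θ e, eθ θ e = Real.cos θ • e + Real.sin θ • crossProduct N₀ e) :
    (∀ θ : ℝ,
        crossProduct (eθ θ e₁) (eθ θ e₂) + crossProduct (eθ θ e₃) (eθ θ e₄) =
          crossProduct e₁ e₂ + crossProduct e₃ e₄) ∧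
      (∃ c : ℝ, crossProduct e₁ e₂ + crossProduct e₃ e₄ = c • N₀) := by
  -- the key dot-product values : ⟨N₀, eᵢ⟩ = -μᵢ/2
  have key : ∀ (N : Fin 3 → ℝ) (μ : ℝ), dot3 N N = 1 → N ≠ N₀ →
      dot3 N₀ ((μ / dot3 (N - N₀) (N - N₀)) • (N - N₀)) = -μ / 2 := by
    intro N μ hN hne
    have hdne : dot3 (N - N₀) (N - N₀) ≠ 0 := fun h =>
      hne (sub_eq_zero.mp (dot3_self_eq_zero h))
    have hdd : dot3 (N - N₀) (N - N₀) = 2 - 2 * dot3 N₀ N := by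
      have hN' := hN; have hN₀' := hN₀
      rw [dot3_exp] at hN' hN₀'
      simp only [dot3_exp, Pi.sub_apply]
      linear_combination hN' + hN₀'
    rw [dot3_smul_right, hdd, dot3_sub_right, hN₀]
    rw [hdd] at hdne
    have h' : 1 - dot3 N₀ N ≠ 0 := fun h => hdne (by linarith)
    field_simp
    ring
  have hu1 : dot3 N₀ e₁ = -1 / 2 := by rw [he₁]; exact key N₁ 1 hN₁ h1
  have hu2 : dot3 N₀ e₂ = 1 / 2 := by
    rw [he₂]; rw [key N₂ (-1) hN₂ h2]; norm_num
  have hu3 : dot3 N₀ e₃ = -1 / 2 := by rw [he₃]; exact key N₃ 1 hN₃ h3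
  have hu4 : dot3 N₀ e₄ = 1 / 2 := by
    rw [he₄]; rw [key N₄ (-1) hN₄ h4]; norm_num
  set A := crossProduct e₁ e₂ with hA
  set B := crossProduct e₃ e₄ with hB
  -- N₀ × (A + B) = 0
  have hcross0 : crossProduct N₀ (A + B) = 0 := by
    have hadd : crossProduct N₀ (A + B) = crossProduct N₀ A + crossProduct N₀ B := by
      simp [map_add]
    rw [hadd, hA, hB, crossL1, crossL1, hu1, hu2, hu3, hu4]
    have hmod : ((1:ℝ) / 2) • e₁ - (-1 / 2 : ℝ) • e₂ + (((1:ℝ) / 2) • e₃ - (-1 / 2 : ℝ) • e₄) =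
        ((1:ℝ) / 2) • (e₁ + e₂ + e₃ + e₄) := by module
    rw [hmod, hclosed, smul_zero]
  -- hence A + B is parallel to N₀
  have hpar : A + B = (dot3 N₀ (A + B)) • N₀ := by
    have h := crossL1 N₀ N₀ (A + B)
    rw [hcross0] at h
    simp only [map_zero, hN₀, one_smul] at h
    exact (sub_eq_zero.mp h.symm).symm
  have hpar2 : A + B = (dot3 N₀ A + dot3 N₀ B) • N₀ := by
    rw [hpar, dot3_add_right]
  refine ⟨?_, ⟨dot3 N₀ (A + B), hpar⟩⟩
  intro θ
  set c := Real.cos θ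
  set s := Real.sin θ
  have hAB : (c * c) • (A + B) + (s * s) • (A + B) = A + B := by
    rw [← add_smul]
    have : c * c + s * s = 1 := by
      have := Real.sin_sq_add_cos_sq θ
      nlinarith [this]
    rw [this, one_smul]
  rw [heθ, heθ, heθ, heθ, crossL2, crossL2, hu1, hu2, hu3, hu4, ← hA, ← hB]
  linear_combination (norm := module) (c * s / 2) • hclosed - (s * s) • hpar2 + hAB
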